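/- arXiv:2310.12750 — 2 statements merged into one kernel-verified Lean document; each statement's English description precedes it below -/
import Mathlib

section
/- Let W be a finite reflection group on V with root system R, and let w, w' = u·w·u⁻¹ be conjugate elements of W. For any subspace V' ⊆ V, let 𝔥_{V'} denote the set of root hyperplanes containing V'. Given angles θ_1 < ... < θ_m, set F_i = Σ_{j≤i} V_w^{θ_j} and F'_i = Σ_{j≤i} V_{w'}^{θ_j}. Then |𝔥_{F_{i-1}} \ 𝔥_{F_i}| = |𝔥_{F'_{i-1}} \ 𝔥_{F'_i}| for all i. Consequently, the quantity Σ_i (θ_i/π)·|𝔥_{F_{i-1}} \ 𝔥_{F_i}| depends only on the conjugacy class of w. -/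
open scoped Classical InnerProductSpace

noncomputable section

variable {V : Type*} [NormedAddCommGroup V] [InnerProductSpace ℝ V] [FiniteDimensional ℝ V]
variable {W : Type*} [Group W] [Finite W]

/-- The real eigenspace `V_w^θ = {v : w v + w⁻¹ v = 2 cos θ • v}`. -/
def realEigenspace (ρ : W →* (V ≃ₗᵢ[ℝ] V)) (w : W) (θ : ℝ) : Submodule ℝ V :=
  LinearMap.ker ((ρ w).toLinearEquiv.toLinearMap + (ρ w⁻¹).toLinearEquiv.toLinearMap
    - (2 * Real.cos θ) • LinearMap.id)

/-- The roots in `R` whose root hyperplane contains the subspace `F`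
(representing the set of root hyperplanes `𝔥_F` containing `F`). -/
def hypIn (R : Finset V) (F : Submodule ℝ V) : Finset V :=
  R.filter fun α => ∀ v ∈ F, ⟪α, v⟫_ℝ = 0

/-- The partial sum `F_i = V_w^{θ_1} + ⋯ + V_w^{θ_i}` of real eigenspaces. -/
def partialSum (ρ : W →* (V ≃ₗᵢ[ℝ] V)) (w : W) {m : ℕ} (θ : Fin m → ℝ) (i : Fin m) :
    Submodule ℝ V :=
  ⨆ j : Fin m, ⨆ _ : j ≤ i, realEigenspace ρ w (θ j)

/-- The previous partial sum `F_{i-1}` (equal to `⊥` when `i = 0`). -/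
def partialSumPrev (ρ : W →* (V ≃ₗᵢ[ℝ] V)) (w : W) {m : ℕ} (θ : Fin m → ℝ) (i : Fin m) :
    Submodule ℝ V :=
  ⨆ j : Fin m, ⨆ _ : j < i, realEigenspace ρ w (θ j)

section Aux
variable {V : Type*} [NormedAddCommGroup V] [InnerProductSpace ℝ V] [FiniteDimensional ℝ V]
variable {W : Type*} [Group W] [Finite W]

lemma rho_mul_apply (ρ : W →* (V ≃ₗᵢ[ℝ] V)) (g h : W) (x : V) :
    (ρ g) ((ρ h) x) = (ρ (g * h)) x := by
  rw [map_mul]; rfl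

lemma realEigenspace_conj (ρ : W →* (V ≃ₗᵢ[ℝ] V)) (w u : W) (θ : ℝ) :
    realEigenspace ρ (u * w * u⁻¹) θ
      = (realEigenspace ρ w θ).map ((ρ u).toLinearEquiv.toLinearMap) := by
  ext v
  constructor
  · intro hv
    refine ⟨(ρ u⁻¹) v, ?_, ?_⟩
    · simp only [realEigenspace, LinearMap.mem_ker, LinearMap.sub_apply, LinearMap.add_apply,
        LinearMap.smul_apply, LinearMap.id_apply] at hv ⊢
      have := congrArg (ρ u⁻¹) hv
      simpa [map_mul, map_inv, mul_assoc, map_sub, map_add, map_smul, sub_eq_zero] using this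
    · show (ρ u) ((ρ u⁻¹) v) = v
      rw [rho_mul_apply]; simp
  · rintro ⟨x, hx, rfl⟩
    simp only [realEigenspace, LinearMap.mem_ker, LinearMap.sub_apply, LinearMap.add_apply,
      LinearMap.smul_apply, LinearMap.id_apply] at hx ⊢
    have h1 : ∀ g : W, ((ρ g).toLinearEquiv.toLinearMap : V → V) = ρ g := fun g => rfl
    have hx' := congrArg (ρ u) hx
    have e1 : (ρ (u * w * u⁻¹)) ((ρ u) x) = (ρ u) ((ρ w) x) := by
      rw [rho_mul_apply, rho_mul_apply]
      congr 1; group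
    have e2 : (ρ (u * w * u⁻¹)⁻¹) ((ρ u) x) = (ρ u) ((ρ w⁻¹) x) := by
      rw [rho_mul_apply, rho_mul_apply]
      congr 1; group
    simp only [h1] at hx' ⊢
    rw [e1, e2]
    simpa [map_sub, map_add, map_smul] using hx'

lemma hypIn_map (ρ : W →* (V ≃ₗᵢ[ℝ] V)) (u : W) (R : Finset V)
    (hRstab : ∀ g : W, ∀ α ∈ R, ρ g α ∈ R) (F : Submodule ℝ V) :
    hypIn R (F.map ((ρ u).toLinearEquiv.toLinearMap)) = (hypIn R F).image (ρ u) := by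
  ext α
  simp only [hypIn, Finset.mem_filter, Finset.mem_image, Submodule.mem_map]
  constructor
  · rintro ⟨hαR, hα⟩
    refine ⟨(ρ u⁻¹) α, ⟨hRstab u⁻¹ α hαR, ?_⟩, ?_⟩
    · intro v hv
      have := hα ((ρ u) v) ⟨v, hv, rfl⟩
      rw [← (ρ u).inner_map_map ((ρ u⁻¹) α) v]
      have huu : (ρ u) ((ρ u⁻¹) α) = α := by
        rw [rho_mul_apply]; simp
      rw [huu]; exact this
    · show (ρ u) ((ρ u⁻¹) α) = α
      rw [rho_mul_apply]; simp
  · rintro ⟨β, ⟨hβR, hβ⟩, rfl⟩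
    refine ⟨hRstab u β hβR, ?_⟩
    rintro v ⟨x, hx, rfl⟩
    exact ((ρ u).inner_map_map β x).trans (hβ x hx)

lemma partialSum_conj (ρ : W →* (V ≃ₗᵢ[ℝ] V)) (w u : W) {m : ℕ} (θ : Fin m → ℝ) (i : Fin m) :
    partialSum ρ (u * w * u⁻¹) θ i
      = (partialSum ρ w θ i).map ((ρ u).toLinearEquiv.toLinearMap) := by
  unfold partialSum
  rw [Submodule.map_iSup]
  refine iSup_congr fun j => ?_
  rw [Submodule.map_iSup]
  exact iSup_congr fun _ => realEigenspace_conj ρ w u (θ j)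

lemma partialSumPrev_conj (ρ : W →* (V ≃ₗᵢ[ℝ] V)) (w u : W) {m : ℕ} (θ : Fin m → ℝ) (i : Fin m) :
    partialSumPrev ρ (u * w * u⁻¹) θ i
      = (partialSumPrev ρ w θ i).map ((ρ u).toLinearEquiv.toLinearMap) := by
  unfold partialSumPrev
  rw [Submodule.map_iSup]
  refine iSup_congr fun j => ?_
  rw [Submodule.map_iSup]
  exact iSup_congr fun _ => realEigenspace_conj ρ w u (θ j)

end Aux

/-- For conjugate elements `w` and `w' = u w u⁻¹`, the cardinalities
`|𝔥_{F_{i-1}} \ 𝔥_{F_i}|` agree, and hence `Σ_i (θ_i/π)·|𝔥_{F_{i-1}} \ 𝔥_{F_i}|` depends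
only on the conjugacy class of `w`. -/
theorem stmt_4 (ρ : W →* (V ≃ₗᵢ[ℝ] V)) (w u : W) (R : Finset V)
    (hRstab : ∀ g : W, ∀ α ∈ R, ρ g α ∈ R)
    {m : ℕ} (θ : Fin m → ℝ) (hθ : StrictMono θ) :
    (∀ i : Fin m,
      ((hypIn R (partialSumPrev ρ w θ i)) \ (hypIn R (partialSum ρ w θ i))).card
        = ((hypIn R (partialSumPrev ρ (u * w * u⁻¹) θ i))
            \ (hypIn R (partialSum ρ (u * w * u⁻¹) θ i))).card) ∧
    (∑ i : Fin m, (θ i / Real.pi) *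
        (((hypIn R (partialSumPrev ρ w θ i)) \ (hypIn R (partialSum ρ w θ i))).card : ℝ))
      = ∑ i : Fin m, (θ i / Real.pi) *
        (((hypIn R (partialSumPrev ρ (u * w * u⁻¹) θ i))
            \ (hypIn R (partialSum ρ (u * w * u⁻¹) θ i))).card : ℝ) := by
  have key : ∀ i : Fin m,
      ((hypIn R (partialSumPrev ρ w θ i)) \ (hypIn R (partialSum ρ w θ i))).card
        = ((hypIn R (partialSumPrev ρ (u * w * u⁻¹) θ i))
            \ (hypIn R (partialSum ρ (u * w * u⁻¹) θ i))).card := by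
    intro i
    rw [partialSumPrev_conj ρ w u θ i, partialSum_conj ρ w u θ i,
      hypIn_map ρ u R hRstab, hypIn_map ρ u R hRstab,
      ← Finset.image_sdiff _ _ (ρ u).injective,
      Finset.card_image_of_injective _ (ρ u).injective]
  exact ⟨key, by simp only [key]⟩
end
end

section
/- Let W be a finite Coxeter group with length function ℓ and longest element w₀, acting on its reflection representation V with positive root system R⁺. Let w ∈ W and suppose there exists v ∈ V with (v, α) > 0 for all α ∈ R⁺ \ R^w and (v, α) = 0 for all α ∈ R^w, where R^w = {α ∈ R : w(α) = α}. Then for any α ∈ R^w and β ∈ Inv(w⁻¹) = {γ ∈ R⁺ : w⁻¹(γ) ∈ −R⁺}, if mα + nβ ∈ R for positive integers m, n, then mα + nβ ∈ Inv(w⁻¹). In particular, both (R^w)⁺ ∪ Inv(w⁻¹) and (R^w)⁻ ∪ Inv(w⁻¹) are closed under taking positive integer combinations that are roots (i.e., convex subsets of R). -/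
open scoped Classical InnerProductSpace

noncomputable section

variable {V : Type*} [NormedAddCommGroup V] [InnerProductSpace ℝ V] [FiniteDimensional ℝ V]

/-- A subset `S` of the root system `R` is convex if it is closed under taking
positive integer combinations `m•α + n•β` that are again roots. -/
def IsConvexIn (R : Finset V) (S : Set V) : Prop :=
  ∀ α ∈ S, ∀ β ∈ S, ∀ m n : ℕ, 0 < m → 0 < n →
    (m : ℝ) • α + (n : ℝ) • β ∈ R → (m : ℝ) • α + (n : ℝ) • β ∈ S

/-- Lemma 4.5: given a vector `v` with `(v, α) > 0` for all positive roots `α ∉ R^w` and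
`(v, α) = 0` for `α ∈ R^w`, any root of the form `mα + nβ` with `α ∈ R^w`,
`β ∈ Inv(w⁻¹)` and `m, n > 0` lies in `Inv(w⁻¹)`; in particular both
`(R^w)⁺ ∪ Inv(w⁻¹)` and `(R^w)⁻ ∪ Inv(w⁻¹)` are convex subsets of `R`. -/
theorem stmt_5 (R Rpos : Finset V) (hsub : Rpos ⊆ R)
    (hsymm : ∀ α ∈ R, -α ∈ R)
    (f : V →ₗ[ℝ] ℝ)
    (hposf : ∀ α ∈ R, (α ∈ Rpos ↔ 0 < f α))
    (hne : ∀ α ∈ R, f α ≠ 0)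
    (w : V ≃ₗᵢ[ℝ] V) (hwR : ∀ α ∈ R, w α ∈ R) (hwR' : ∀ α ∈ R, w.symm α ∈ R)
    (v : V)
    (hv1 : ∀ α ∈ Rpos, w α ≠ α → 0 < ⟪v, α⟫_ℝ)
    (hv2 : ∀ α ∈ R, w α = α → ⟪v, α⟫_ℝ = 0) :
    (∀ α ∈ R, w α = α →
      ∀ β ∈ Rpos, -(w.symm β) ∈ Rpos →
        ∀ m n : ℕ, 0 < m → 0 < n → (m : ℝ) • α + (n : ℝ) • β ∈ R →
          ((m : ℝ) • α + (n : ℝ) • β ∈ Rpos ∧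
            -(w.symm ((m : ℝ) • α + (n : ℝ) • β)) ∈ Rpos)) ∧
    IsConvexIn R (({α : V | α ∈ R ∧ w α = α ∧ α ∈ Rpos}) ∪
      {γ : V | γ ∈ Rpos ∧ -(w.symm γ) ∈ Rpos}) ∧
    IsConvexIn R (({α : V | α ∈ R ∧ w α = α ∧ -α ∈ Rpos}) ∪
      {γ : V | γ ∈ Rpos ∧ -(w.symm γ) ∈ Rpos}) := by
  have negpos : ∀ γ ∈ R, γ ∉ Rpos → -γ ∈ Rpos := by
    intro γ hγ h
    have hfn := hne γ hγ
    have hlt : f γ < 0 :=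
      lt_of_le_of_ne (not_lt.1 fun h' => h ((hposf γ hγ).2 h')) hfn
    exact (hposf (-γ) (hsymm γ hγ)).2 (by simpa using hlt)
  have notboth : ∀ γ ∈ Rpos, -γ ∉ Rpos := by
    intro γ hγ h
    have h1 := (hposf γ (hsub hγ)).1 hγ
    have h2 := (hposf (-γ) (hsub h)).1 h
    simp only [map_neg] at h2
    linarith
  have fneg : ∀ γ ∈ R, -γ ∈ Rpos → f γ < 0 := by
    intro γ hγ h
    have := (hposf (-γ) (hsub h)).1 h
    simp only [map_neg] at this; linarith
  -- the key claim
  have key : ∀ α ∈ R, w α = α →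
      ∀ β ∈ Rpos, -(w.symm β) ∈ Rpos →
        ∀ m n : ℕ, 0 < m → 0 < n → (m : ℝ) • α + (n : ℝ) • β ∈ R →
          ((m : ℝ) • α + (n : ℝ) • β ∈ Rpos ∧
            -(w.symm ((m : ℝ) • α + (n : ℝ) • β)) ∈ Rpos) := by
    intro α hα hwα β hβ hβinv m n hm hn hγR
    set γ := (m : ℝ) • α + (n : ℝ) • β with hγdef
    have hwsα : w.symm α = α := w.injective (by rw [w.apply_symm_apply, hwα])
    have hwβ : w β ≠ β := by
      intro h
      have hsβ : w.symm β = β := w.injective (by rw [w.apply_symm_apply, h])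
      rw [hsβ] at hβinv
      exact notboth β hβ hβinv
    have hnpos : (0:ℝ) < n := by exact_mod_cast hn
    have hvα : ⟪v, α⟫_ℝ = 0 := hv2 α hα hwα
    have hvβ : 0 < ⟪v, β⟫_ℝ := hv1 β hβ hwβ
    have hvγ : 0 < ⟪v, γ⟫_ℝ := by
      rw [hγdef, inner_add_right, real_inner_smul_right, real_inner_smul_right, hvα]
      nlinarith
    have hwγ : w γ ≠ γ := fun h => ne_of_gt hvγ (hv2 γ hγR h)
    have hγpos : γ ∈ Rpos := by
      by_contra h
      have hng := negpos γ hγR h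
      have : w (-γ) ≠ -γ := by
        simp only [map_neg, ne_eq, neg_inj]; exact hwγ
      have := hv1 (-γ) hng this
      rw [inner_neg_right] at this
      linarith
    refine ⟨hγpos, ?_⟩
    have hwsγ : w.symm γ = (m : ℝ) • α + (n : ℝ) • w.symm β := by
      rw [hγdef, map_add, LinearIsometryEquiv.map_smul, LinearIsometryEquiv.map_smul, hwsα]
    have hvsβ : ⟪v, w.symm β⟫_ℝ < 0 := by
      have hne' : w (-(w.symm β)) ≠ -(w.symm β) := by
        intro h
        simp only [map_neg, w.apply_symm_apply, neg_inj] at h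
        have : w.symm β ∈ Rpos := by rw [← h]; exact hβ
        exact notboth _ this hβinv
      have := hv1 _ hβinv hne'
      rw [inner_neg_right] at this
      linarith
    have hvsγ : ⟪v, w.symm γ⟫_ℝ < 0 := by
      rw [hwsγ, inner_add_right, real_inner_smul_right, real_inner_smul_right, hvα]
      nlinarith
    have hsγR : w.symm γ ∈ R := hwR' γ hγR
    have hnot : w.symm γ ∉ Rpos := by
      intro h
      by_cases hfix : w (w.symm γ) = w.symm γ
      · have := hv2 _ hsγR hfix
        linarith
      · have := hv1 _ h hfix
        linarith
    exact negpos _ hsγR hnot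
  refine ⟨key, ?_, ?_⟩
  -- both-Inv case, shared
  all_goals {
    intro α hα β hβ m n hm hn hγR
    have hmpos : (0:ℝ) < m := by exact_mod_cast hm
    have hnpos : (0:ℝ) < n := by exact_mod_cast hn
    have fsmul : f ((m : ℝ) • α + (n : ℝ) • β) = m * f α + n * f β := by
      simp [map_add, map_smul]
    rcases hα with hα | hα <;> rcases hβ with hβ | hβ
    · -- both fixed
      obtain ⟨hαR, hwα, hαs⟩ := hα
      obtain ⟨hβR, hwβ, hβs⟩ := hβ
      left
      refine ⟨hγR, ?_, ?_⟩
      · rw [map_add, LinearIsometryEquiv.map_smul, LinearIsometryEquiv.map_smul, hwα, hwβ]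
      · first
        | exact (hposf _ hγR).2 (by
            rw [fsmul]
            have h1 := (hposf α hαR).1 hαs
            have h2 := (hposf β hβR).1 hβs
            nlinarith)
        | · have h1 := fneg α hαR hαs
            have h2 := fneg β hβR hβs
            refine (hposf _ (hsymm _ hγR)).2 ?_
            rw [map_neg, fsmul]
            nlinarith
    · -- α fixed, β in Inv
      obtain ⟨hαR, hwα, hαs⟩ := hα
      exact Or.inr (key α hαR hwα β hβ.1 hβ.2 m n hm hn hγR)
    · -- α in Inv, β fixed
      obtain ⟨hβR, hwβ, hβs⟩ := hβ
      have := key β hβR hwβ α hα.1 hα.2 n m hn hm (by rwa [add_comm] at hγR)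
      rw [add_comm] at this
      exact Or.inr this
    · -- both in Inv
      right
      have h1 := (hposf α (hsub hα.1)).1 hα.1
      have h2 := (hposf β (hsub hβ.1)).1 hβ.1
      have hγpos : (m : ℝ) • α + (n : ℝ) • β ∈ Rpos :=
        (hposf _ hγR).2 (by rw [fsmul]; nlinarith)
      refine ⟨hγpos, ?_⟩
      have hsγR : w.symm ((m : ℝ) • α + (n : ℝ) • β) ∈ R := hwR' _ hγR
      refine (hposf _ (hsymm _ hsγR)).2 ?_
      have hα' := fneg _ (hwR' α (hsub hα.1)) hα.2
      have hβ' := fneg _ (hwR' β (hsub hβ.1)) hβ.2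
      rw [map_neg, map_add, LinearIsometryEquiv.map_smul, LinearIsometryEquiv.map_smul,
        map_add, map_smul, map_smul, smul_eq_mul, smul_eq_mul]
      nlinarith }
end
end
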